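/- arXiv:1105.5174 — 4 statements merged into one kernel-verified Lean document; each statement's English description precedes it below -/
import Mathlib

section
/- Suppose G acts freely and properly on M, H: T*M → ℝ is G-invariant, the fiber derivative 𝔽H: T*M → TM is fiberwise linear and non-degenerate when restricted to J⁻¹(0), and ℋ_x ∩ 𝒱_x = 0 for all x ∈ M, where 𝒱_x is the tangent space to the G-orbit through x and ℋ_x := 𝔽H(J⁻¹(0) ∩ T*_xM). Then T_xM = ℋ_x ⊕ 𝒱_x for all x, and ℋ defines a principal connection on the principal bundle π: M → M/G. -/
/-!
`ℋ_x` is the image under `𝔽H` of the annihilator of `𝒱_x`. Non-degeneracy makes `𝔽H` injective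
on that annihilator, so `dim ℋ_x = dim V - dim 𝒱_x`, and together with `ℋ_x ∩ 𝒱_x = 0` this
gives `V = ℋ_x ⊕ 𝒱_x`. Invariance of `H` makes `𝔽H` equivariant, and equivariance of the
infinitesimal generators makes `dΦ_g` carry the annihilator of `𝒱_x` onto that of `𝒱_{gx}`;
hence `dΦ_g ℋ_x = ℋ_{gx}`.
-/

open Module LinearMap

section LinearAlgebra

variable {K V V' W W' : Type*} [Field K] [AddCommGroup V] [Module K V]
  [AddCommGroup V'] [Module K V'] [AddCommGroup W] [Module K W] [AddCommGroup W'] [Module K W']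

theorem Submodule.finrank_map_of_disjoint_ker {p : Submodule K V} {f : V →ₗ[K] W}
    (h : Disjoint p (ker f)) : finrank K (p.map f) = finrank K p := by
  rw [← range_domRestrict, finrank_range_of_inj (injective_domRestrict_iff.mpr h)]

theorem LinearMap.finrank_ker_dualMap_add_finrank_range [FiniteDimensional K V]
    (f : W →ₗ[K] V) : finrank K (ker f.dualMap) + finrank K (range f) = finrank K V := by
  rw [ker_dualMap_eq_dualAnnihilator_range, add_comm,
    Subspace.finrank_add_finrank_dualAnnihilator_eq]

theorem LinearMap.isCompl_map_ker_dualMap_range [FiniteDimensional K V] (f : W →ₗ[K] V)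
    {F : Dual K V →ₗ[K] V} (hF : Disjoint (ker f.dualMap) (ker F))
    (h : (ker f.dualMap).map F ⊓ range f = ⊥) : IsCompl ((ker f.dualMap).map F) (range f) := by
  refine (Submodule.isCompl_iff_disjoint _ _ ?_).mpr (disjoint_iff.mpr h)
  rw [Submodule.finrank_map_of_disjoint_ker hF, finrank_ker_dualMap_add_finrank_range]

theorem LinearMap.ker_dualMap_eq_map_of_comp_eq {f : W →ₗ[K] V} {f' : W' →ₗ[K] V'}
    (A : V ≃ₗ[K] V') (B : W ≃ₗ[K] W') (h : f' ∘ₗ B = A ∘ₗ f) :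
    ker f'.dualMap = (ker f.dualMap).map (A.symm : V' →ₗ[K] V).dualMap := by
  calc ker f'.dualMap = ker (B.dualMap.toLinearMap ∘ₗ f'.dualMap) :=
        (LinearEquiv.ker_comp _ _).symm
    _ = ker (f.dualMap ∘ₗ A.dualMap.toLinearMap) := by
        simp only [LinearEquiv.dualMap, dualMap_comp_dualMap, h]
    _ = (ker f.dualMap).map (A.symm : V' →ₗ[K] V).dualMap := by
        rw [ker_comp, Submodule.comap_equiv_eq_map_symm]; rfl

theorem LinearMap.map_map_ker_dualMap_of_comp_eq (f : W →ₗ[K] V) {f' : W' →ₗ[K] V'}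
    {F : Dual K V →ₗ[K] V} {F' : Dual K V' →ₗ[K] V'} (A : V ≃ₗ[K] V') (B : W ≃ₗ[K] W')
    (h : f' ∘ₗ B = A ∘ₗ f) (hF : F' ∘ₗ (A.symm : V' →ₗ[K] V).dualMap = A ∘ₗ F) :
    ((ker f.dualMap).map F).map (A : V →ₗ[K] V') = (ker f'.dualMap).map F' := by
  rw [ker_dualMap_eq_map_of_comp_eq A B h, ← Submodule.map_comp, ← Submodule.map_comp, hF]

end LinearAlgebra

section FiberDerivative

variable {𝕜 V V' : Type*} [NontriviallyNormedField 𝕜]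
  [AddCommGroup V] [Module 𝕜 V] [AddCommGroup V'] [Module 𝕜 V']

def IsFiberDerivative (H : Dual 𝕜 V → 𝕜) (F : Dual 𝕜 V →ₗ[𝕜] V) : Prop :=
  ∀ α β : Dual 𝕜 V, β (F α) = deriv (fun ε : 𝕜 => H (α + ε • β)) 0

theorem IsFiberDerivative.comp_dualMap_symm {H : Dual 𝕜 V → 𝕜} {H' : Dual 𝕜 V' → 𝕜}
    {F : Dual 𝕜 V →ₗ[𝕜] V} {F' : Dual 𝕜 V' →ₗ[𝕜] V'} (hF : IsFiberDerivative H F)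
    (hF' : IsFiberDerivative H' F') (A : V ≃ₗ[𝕜] V')
    (hH : ∀ α, H' ((A.symm : V' →ₗ[𝕜] V).dualMap α) = H α) :
    F' ∘ₗ (A.symm : V' →ₗ[𝕜] V).dualMap = A ∘ₗ F := by
  ext α : 1
  refine sub_eq_zero.mp ((forall_dual_apply_eq_zero_iff 𝕜 _).mp fun β => ?_)
  rw [map_sub, sub_eq_zero]
  have hβ : β = (A.symm : V' →ₗ[𝕜] V).dualMap ((A : V →ₗ[𝕜] V').dualMap β) := by ext; simp
  calc β (F' ((A.symm : V' →ₗ[𝕜] V).dualMap α))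
      = deriv (fun ε : 𝕜 =>
          H' ((A.symm : V' →ₗ[𝕜] V).dualMap (α + ε • (A : V →ₗ[𝕜] V').dualMap β))) 0 := by
        rw [hF']; simp only [map_add, map_smul, ← hβ]
    _ = β (A (F α)) := by simp_rw [hH]; exact (hF α _).symm

end FiberDerivative

theorem FH_J0_defines_principal_connection_general
    {G : Type*} [Group G] {M : Type*} [MulAction G M]
    {V : Type*} [AddCommGroup V] [Module ℝ V] [FiniteDimensional ℝ V]
    {𝔤 : Type*} [AddCommGroup 𝔤] [Module ℝ 𝔤]
    (dΦ : G → M → V ≃ₗ[ℝ] V)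
    (Ad : G → 𝔤 ≃ₗ[ℝ] 𝔤)
    (gen : M → 𝔤 →ₗ[ℝ] V)
    (hgen : ∀ (g : G) (x : M) (ξ : 𝔤), gen (g • x) (Ad g ξ) = dΦ g x (gen x ξ))
    (H : M → Module.Dual ℝ V → ℝ)
    -- the fiber derivative is fiberwise linear
    (FH : M → Module.Dual ℝ V →ₗ[ℝ] V)
    (hFH : ∀ (x : M) (α β : Module.Dual ℝ V),
      β (FH x α) = deriv (fun ε : ℝ => H x (α + ε • β)) 0)
    -- G-invariance of the Hamiltonian
    (hH : ∀ (g : G) (x : M) (α : Module.Dual ℝ V),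
      H (g • x) (α.comp (dΦ g x).symm.toLinearMap) = H x α)
    -- non-degeneracy of 𝔽H on J⁻¹(0)
    (hnondeg : ∀ (x : M) (α : Module.Dual ℝ V),
      α ∈ LinearMap.ker (gen x).dualMap → FH x α = 0 → α = 0)
    -- ℋ_x ∩ 𝒱_x = 0
    (htriv : ∀ x : M,
      (LinearMap.ker (gen x).dualMap).map (FH x) ⊓ LinearMap.range (gen x) = ⊥) :
    -- T_xM = ℋ_x ⊕ 𝒱_x, and ℋ is G-invariant: a principal connection
    (∀ x : M,
      IsCompl ((LinearMap.ker (gen x).dualMap).map (FH x)) (LinearMap.range (gen x))) ∧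
    (∀ (g : G) (x : M),
      ((LinearMap.ker (gen x).dualMap).map (FH x)).map (dΦ g x).toLinearMap
        = (LinearMap.ker (gen (g • x)).dualMap).map (FH (g • x))) := by
  refine ⟨fun x => (gen x).isCompl_map_ker_dualMap_range
    (Submodule.disjoint_def.mpr (hnondeg x)) (htriv x), fun g x => ?_⟩
  have isFiberDerivative : ∀ x, IsFiberDerivative (H x) (FH x) := hFH
  exact (gen x).map_map_ker_dualMap_of_comp_eq (dΦ g x) (Ad g) (LinearMap.ext (hgen g x))
    ((isFiberDerivative x).comp_dualMap_symm (isFiberDerivative (g • x)) (dΦ g x) (hH g x))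

/-- Suppose `G` acts freely (and properly) on `M`, `H : T*M → ℝ` is
`G`-invariant, the fiber derivative `𝔽H : T*M → TM` is fiberwise linear and non-degenerate
when restricted to `J⁻¹(0)`, and `ℋ_x ∩ 𝒱_x = 0` for all `x`, where `𝒱_x` is the tangent
space to the `G`-orbit through `x` and `ℋ_x := 𝔽H(J⁻¹(0) ∩ T*_xM)`.  Then
`T_xM = ℋ_x ⊕ 𝒱_x` for all `x`, and the distribution `ℋ` is `G`-invariant; i.e. `ℋ`
defines a principal connection on `π : M → M/G` (a `G`-invariant distribution complementary
to the vertical distribution).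

Trivialized model: fibers of `TM` are `V`, of `T*M` are `Dual ℝ V`; `gen x ξ = ξ_M(x)`;
freeness of the action is expressed infinitesimally by injectivity of `gen x`;
`J⁻¹(0) ∩ T*_xM = ker ((gen x).dualMap)`; `𝒱_x = range (gen x)`;
`ℋ_x = (FH x) (ker (gen x).dualMap)`. -/
theorem FH_J0_defines_principal_connection
    {G : Type*} [Group G] {M : Type*} [MulAction G M]
    {V : Type*} [AddCommGroup V] [Module ℝ V] [FiniteDimensional ℝ V]
    {𝔤 : Type*} [AddCommGroup 𝔤] [Module ℝ 𝔤] [FiniteDimensional ℝ 𝔤]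
    (dΦ : G → M → V ≃ₗ[ℝ] V)
    (Ad : G → 𝔤 ≃ₗ[ℝ] 𝔤)
    (gen : M → 𝔤 →ₗ[ℝ] V)
    (hgen : ∀ (g : G) (x : M) (ξ : 𝔤), gen (g • x) (Ad g ξ) = dΦ g x (gen x ξ))
    -- freeness of the action (infinitesimally): ξ ↦ ξ_M(x) is injective
    (hfree : ∀ x : M, Function.Injective (gen x))
    (H : M → Module.Dual ℝ V → ℝ)
    -- the fiber derivative is fiberwise linear
    (FH : M → Module.Dual ℝ V →ₗ[ℝ] V)
    (hFH : ∀ (x : M) (α β : Module.Dual ℝ V),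
      β (FH x α) = deriv (fun ε : ℝ => H x (α + ε • β)) 0)
    -- G-invariance of the Hamiltonian
    (hH : ∀ (g : G) (x : M) (α : Module.Dual ℝ V),
      H (g • x) (α.comp (dΦ g x).symm.toLinearMap) = H x α)
    -- non-degeneracy of 𝔽H on J⁻¹(0)
    (hnondeg : ∀ (x : M) (α : Module.Dual ℝ V),
      α ∈ LinearMap.ker (gen x).dualMap → FH x α = 0 → α = 0)
    -- ℋ_x ∩ 𝒱_x = 0
    (htriv : ∀ x : M,
      (LinearMap.ker (gen x).dualMap).map (FH x) ⊓ LinearMap.range (gen x) = ⊥) :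
    -- T_xM = ℋ_x ⊕ 𝒱_x, and ℋ is G-invariant: a principal connection
    (∀ x : M,
      IsCompl ((LinearMap.ker (gen x).dualMap).map (FH x)) (LinearMap.range (gen x))) ∧
    (∀ (g : G) (x : M),
      ((LinearMap.ker (gen x).dualMap).map (FH x)).map (dΦ g x).toLinearMap
        = (LinearMap.ker (gen (g • x)).dualMap).map (FH (g • x))) :=
  FH_J0_defines_principal_connection_general dΦ Ad gen hgen H FH hFH hH hnondeg htriv
end

section
/- For the affine optimal control problem with quadratic cost, the horizontal space ℋ_x := 𝔽H_df(J⁻¹(0) ∩ T*_xM) defined via the drift-free optimal Hamiltonian H_df satisfies ℋ_x ∩ 𝒱_x = 0, where 𝒱_x is the tangent space to the G-orbit through x. Concretely: if ξ ∈ 𝔤 and ξ_M(x) = 𝔽H_df(α_x) for some α_x ∈ J⁻¹(0), then ξ_M(x) = 0. -/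
/-!
Pairing `𝔽H_df(α)` with `α` itself gives `cᵀ g⁻¹ c` for `c i = ⟨α, X_i⟩`, i.e. twice `H_df(α)`.
If `𝔽H_df(α)` is vertical and `α ∈ J⁻¹(0)`, this pairing vanishes, so positive definiteness forces
`c = 0`, and then `𝔽H_df(α)`, a combination of the `X_j` with coefficients linear in `c`, is zero.
-/

open Matrix

section FiberDeriv

variable {V : Type*} [AddCommGroup V] [Module ℝ V] {ι : Type*} [Fintype ι]

/-- The fiber derivative `α ↦ A^{ij} ⟨α, Y_i⟩ Y_j` of the quadratic Hamiltonian
`α ↦ ½ A^{ij} ⟨α, Y_i⟩ ⟨α, Y_j⟩`. -/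
def fiberDeriv (Y : ι → V) (A : Matrix ι ι ℝ) (α : Module.Dual ℝ V) : V :=
  ∑ i, ∑ j, (A i j * α (Y i)) • Y j

theorem dual_apply_fiberDeriv (Y : ι → V) (A : Matrix ι ι ℝ) (α : Module.Dual ℝ V) :
    α (fiberDeriv Y A α) = (fun i ↦ α (Y i)) ⬝ᵥ A *ᵥ (fun i ↦ α (Y i)) := by
  simp only [fiberDeriv, map_sum, map_smul, smul_eq_mul, dotProduct, mulVec, Finset.mul_sum]
  exact Fintype.sum_congr _ _ fun i ↦ Fintype.sum_congr _ _ fun j ↦ by ring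

theorem fiberDeriv_eq_zero_of_dual_apply_eq_zero {Y : ι → V} {A : Matrix ι ι ℝ} (hA : A.PosDef)
    {α : Module.Dual ℝ V} (h : α (fiberDeriv Y A α) = 0) : fiberDeriv Y A α = 0 := by
  have hc : (fun i ↦ α (Y i)) = 0 := by
    by_contra hne
    have hpos := hA.dotProduct_mulVec_pos hne
    rw [star_trivial, ← dual_apply_fiberDeriv, h] at hpos
    exact lt_irrefl 0 hpos
  simp [fiberDeriv, funext_iff.mp hc]

end FiberDeriv

/-- For the affine optimal control problem with quadratic cost, the
horizontal space `ℋ_x := 𝔽H_df(J⁻¹(0) ∩ T*_xM)`, defined via the drift-free optimal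
Hamiltonian `H_df`, satisfies `ℋ_x ∩ 𝒱_x = 0`, where `𝒱_x` is the tangent space to the
`G`-orbit through `x`.  Concretely: if `ξ ∈ 𝔤` and `ξ_M(x) = 𝔽H_df(α_x)` for some
`α_x ∈ J⁻¹(0)`, then `ξ_M(x) = 0`.

Here `𝔽H_df(α_x) = g^{ij} ⟨α_x, X_i(x)⟩ X_j(x)` (summation convention) with `(g^{ij})`
the positive-definite inverse metric matrix on the control distribution, `gen x ξ = ξ_M(x)`
the infinitesimal generator, and `J⁻¹(0)` means `α (ξ_M(x)) = 0` for all `ξ ∈ 𝔤`. -/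
theorem affine_horizontal_meets_vertical_trivially
    {M : Type*}
    {V : Type*} [AddCommGroup V] [Module ℝ V]
    {𝔤 : Type*} [AddCommGroup 𝔤] [Module ℝ 𝔤]
    {d : ℕ}
    (X : Fin d → M → V)
    (ginv : M → Matrix (Fin d) (Fin d) ℝ)
    (hpos : ∀ x : M, (ginv x).PosDef)
    (gen : M → 𝔤 →ₗ[ℝ] V) :
    -- ℋ_x ∩ 𝒱_x = 0 as sets ...
    (∀ (x : M) (v : V),
      (∃ α : Module.Dual ℝ V, (∀ η : 𝔤, α (gen x η) = 0) ∧
          v = ∑ i, ∑ j, (ginv x i j * α (X i x)) • X j x) →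
      (∃ ξ : 𝔤, v = gen x ξ) → v = 0) ∧
    -- ... concretely: ξ_M(x) = 𝔽H_df(α_x) with α_x ∈ J⁻¹(0) implies ξ_M(x) = 0
    (∀ (x : M) (ξ : 𝔤) (α : Module.Dual ℝ V),
      (∀ η : 𝔤, α (gen x η) = 0) →
      gen x ξ = ∑ i, ∑ j, (ginv x i j * α (X i x)) • X j x →
      gen x ξ = 0) := by
  have vertical_eq_zero (x : M) (ξ : 𝔤) (α : Module.Dual ℝ V) (hJ : ∀ η : 𝔤, α (gen x η) = 0)
      (hξ : gen x ξ = fiberDeriv (X · x) (ginv x) α) : gen x ξ = 0 := by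
    rw [hξ]
    exact fiberDeriv_eq_zero_of_dual_apply_eq_zero (hpos x) (hξ ▸ hJ ξ)
  refine ⟨?_, vertical_eq_zero⟩
  rintro x v ⟨α, hJ, hv⟩ ⟨ξ, rfl⟩
  exact vertical_eq_zero x ξ α hJ hv
end

section
/- Under the hypotheses that the control Hamiltonian Ĥ is invariant under Ψ̂_g and that for each λ_x ∈ T*_xM the equation 𝔽_cĤ(λ_x, u*_x(λ_x)) = 0 uniquely determines the optimal control u*_x(λ_x) ∈ ℝ^d, the optimal control map u*: T*M → E is G-equivariant: Ψ_g ∘ u* = u* ∘ T*Φ_{g⁻¹} for all g ∈ G. -/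
/-! Since `Ĥ_{g·x, T*Φ_{g⁻¹} λ} ∘ Ψ_g = Ĥ_{x, λ}` with `Ψ_g` linear, the directional derivatives of the
left side at `u` are those of `Ĥ_{g·x, T*Φ_{g⁻¹} λ}` at `Ψ_g u`; hence `Ψ_g` carries the critical
point `u*_x(λ)` to a critical point, which by uniqueness is `u*_{g·x}(T*Φ_{g⁻¹} λ)`. -/

section LineDerivCompLinear

variable {𝕜 : Type*} [NontriviallyNormedField 𝕜]
  {E : Type*} [AddCommGroup E] [Module 𝕜 E] {E' : Type*} [AddCommGroup E'] [Module 𝕜 E']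
  {F : Type*} [NormedAddCommGroup F] [NormedSpace 𝕜 F]

theorem lineDeriv_comp_linearMap (f : E → F) (L : E' →ₗ[𝕜] E) (x v : E') :
    lineDeriv 𝕜 (f ∘ L) x v = lineDeriv 𝕜 f (L x) (L v) := by
  simp only [lineDeriv, Function.comp_apply, map_add, map_smul]

theorem forall_lineDeriv_comp_linearEquiv_eq_zero_iff (f : E → F) (e : E' ≃ₗ[𝕜] E) (x : E') :
    (∀ v, lineDeriv 𝕜 (f ∘ e) x v = 0) ↔ ∀ v, lineDeriv 𝕜 f (e x) v = 0 := by
  simp only [← LinearEquiv.coe_toLinearMap, lineDeriv_comp_linearMap]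
  exact e.toEquiv.forall_congr_right (q := fun v ↦ lineDeriv 𝕜 f (e x) v = 0)

end LineDerivCompLinear

/-- Under the hypotheses that the control Hamiltonian `Ĥ` is invariant under
`Ψ̂_g(λ_x, u_x) = (T*Φ_{g⁻¹}(λ_x), Ψ_g(u_x))` and that, for each `λ_x ∈ T*_xM`, the equation
`𝔽_cĤ(λ_x, u*_x(λ_x)) = 0` uniquely determines the optimal control `u*_x(λ_x) ∈ ℝ^d`, the
optimal control map `u* : T*M → E` is `G`-equivariant: `Ψ_g ∘ u* = u* ∘ T*Φ_{g⁻¹}`.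

Here `⟨𝔽_cĤ(λ_x,u_x), w_x⟩ = d/dε|₀ Ĥ(λ_x, u_x + ε w_x)`, so the condition
`𝔽_cĤ(λ_x, u) = 0` reads: all directional derivatives of `Ĥ` in the control slot vanish. -/
theorem optimal_control_equivariant
    {G : Type*} [Group G] {M : Type*} [MulAction G M]
    {V : Type*} [AddCommGroup V] [Module ℝ V]
    {d : ℕ}
    (dΦ : G → M → V ≃ₗ[ℝ] V)
    (σ : G → (Fin d → ℝ) ≃ₗ[ℝ] (Fin d → ℝ))
    (Hhat : M → Module.Dual ℝ V → (Fin d → ℝ) → ℝ)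
    -- invariance of the control Hamiltonian: Ĥ ∘ Ψ̂_g = Ĥ
    (hinv : ∀ (g : G) (x : M) (lam : Module.Dual ℝ V) (u : Fin d → ℝ),
      Hhat (g • x) (lam.comp (dΦ g x).symm.toLinearMap) (σ g u) = Hhat x lam u)
    (ustar : M → Module.Dual ℝ V → (Fin d → ℝ))
    -- 𝔽_cĤ(λ_x, u) = 0 uniquely determines the optimal control u = u*_x(λ_x)
    (hustar : ∀ (x : M) (lam : Module.Dual ℝ V) (u : Fin d → ℝ),
      (∀ w : Fin d → ℝ, deriv (fun ε : ℝ => Hhat x lam (u + ε • w)) 0 = 0)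
        ↔ u = ustar x lam) :
    -- equivariance: Ψ_g ∘ u* = u* ∘ T*Φ_{g⁻¹}
    ∀ (g : G) (x : M) (lam : Module.Dual ℝ V),
      σ g (ustar x lam) = ustar (g • x) (lam.comp (dΦ g x).symm.toLinearMap) := by
  intro g x lam
  have hcomp : Hhat (g • x) (lam.comp (dΦ g x).symm.toLinearMap) ∘ σ g = Hhat x lam :=
    funext (hinv g x lam)
  -- `lineDeriv ℝ f u w` unfolds to `deriv (fun ε ↦ f (u + ε • w)) 0`, the form used in `hustar`.
  have hcrit : ∀ w, lineDeriv ℝ (Hhat x lam) (ustar x lam) w = 0 := (hustar x lam _).mpr rfl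
  rw [← hcomp, forall_lineDeriv_comp_linearEquiv_eq_zero_iff] at hcrit
  exact (hustar _ _ _).mp hcrit
end

section
/- For the snakeboard kinematic system on M = SE(2) × S¹ × S¹ with coordinates (x₁, x₂, θ, ψ, φ) and control vector fields X₁ = cosθ ∂_{x₁} + sinθ ∂_{x₂} − (tanφ/r) ∂_θ, X₂ = ∂_ψ, X₃ = ∂_φ, and symmetry group G = ℝ² × SO(2) acting by (a,b,β)·(x₁,x₂,θ,ψ,φ) = (x₁+a, x₂+b, θ, ψ+β, φ): the momentum map of the cotangent lifted action is J(x, λ) = (λ₁, λ₂, λ_ψ), and the distribution ℋ = 𝔽H(J⁻¹(0)) equals span{X₁, X₃}, which is a proper subspace of 𝒟 = span{X₁, X₂, X₃} complementary in TM to the tangent spaces of group orbits. -/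
/-!
The optimal Hamiltonian is `½ ∑ₖ ⟨λ, Xₖ⟩²`, whose fiber derivative is `λ ↦ ∑ₖ ⟨λ, Xₖ⟩ Xₖ`.
On `J⁻¹(0)` the coefficient `⟨λ, X₂⟩ = λ_ψ` vanishes while `⟨λ, X₁⟩ = -λ_θ tan φ / r` and
`⟨λ, X₃⟩ = λ_φ` stay free, so `𝔽H(J⁻¹(0)) = span{X₁, X₃}`. As `tan φ ≠ 0`, `X₁` has a nonzero
`θ`-component, so `X₁` and `X₃ = ∂_φ` supply exactly the `θ`- and `φ`-directions missing from the
orbit tangent space `span{∂_{x₁}, ∂_{x₂}, ∂_ψ}`.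
-/

open Matrix Submodule

section NormalHamiltonian

variable {ι n : Type*} [Fintype ι] [Fintype n]

/-- `max_u ⟨λ, ∑ uₖ Xₖ⟩ - ½|u|²`, attained at `uₖ = ⟨λ, Xₖ⟩`. -/
noncomputable def normalHamiltonian (X : ι → n → ℝ) (lam : n → ℝ) : ℝ :=
  (1/2) * ∑ k, (lam ⬝ᵥ X k) ^ 2

/-- The fiber derivative `𝔽H(λ)`, characterized by `⟨w, 𝔽H(λ)⟩ = d/dε|₀ H(λ + ε w)`. -/
def IsFiberDeriv (H : (n → ℝ) → ℝ) (lam v : n → ℝ) : Prop :=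
  ∀ w, w ⬝ᵥ v = deriv (fun ε : ℝ => H (lam + ε • w)) 0

theorem hasDerivAt_normalHamiltonian_add_smul (X : ι → n → ℝ) (lam w : n → ℝ) :
    HasDerivAt (fun ε : ℝ => normalHamiltonian X (lam + ε • w))
      (∑ k, (lam ⬝ᵥ X k) * (w ⬝ᵥ X k)) 0 := by
  have hline : ∀ k, HasDerivAt (fun ε : ℝ => (lam + ε • w) ⬝ᵥ X k) (w ⬝ᵥ X k) 0 := fun k => by
    simp only [add_dotProduct, smul_dotProduct, smul_eq_mul]
    simpa using ((hasDerivAt_id (0 : ℝ)).mul_const (w ⬝ᵥ X k)).const_add (lam ⬝ᵥ X k)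
  refine ((HasDerivAt.fun_sum (u := Finset.univ) fun k _ => (hline k).pow 2).const_mul
    (1/2 : ℝ)).congr_deriv ?_
  rw [zero_smul, add_zero, Finset.mul_sum]
  exact Finset.sum_congr rfl fun k _ => by norm_num; ring

theorem IsFiberDeriv.eq_sum_smul [DecidableEq n] {X : ι → n → ℝ} {lam v : n → ℝ}
    (hv : IsFiberDeriv (normalHamiltonian X) lam v) : v = ∑ k, (lam ⬝ᵥ X k) • X k := by
  ext j
  have hj := hv (Pi.single j 1)
  rw [single_dotProduct, one_mul, (hasDerivAt_normalHamiltonian_add_smul X lam _).deriv] at hj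
  simpa [single_dotProduct] using hj

end NormalHamiltonian

section Snakeboard

variable (c s κ : ℝ)

def snakeboardOrbitTangent : Submodule ℝ (Fin 5 → ℝ) :=
  span ℝ {![1, 0, 0, 0, 0], ![0, 1, 0, 0, 0], ![0, 0, 0, 1, 0]}

theorem mem_snakeboardOrbitTangent_iff {v : Fin 5 → ℝ} :
    v ∈ snakeboardOrbitTangent ↔ v 2 = 0 ∧ v 4 = 0 := by
  rw [snakeboardOrbitTangent, mem_span_triple]
  constructor
  · rintro ⟨a, b, d, rfl⟩
    simp
  · rintro ⟨h2, h4⟩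
    refine ⟨v 0, v 1, v 3, ?_⟩
    ext i
    fin_cases i <;> simp [h2, h4]

theorem span_pair_lt_span_triple :
    span ℝ {![c, s, κ, 0, 0], ![0, 0, 0, 0, 1]}
      < span ℝ {![c, s, κ, 0, 0], ![0, 0, 0, 1, 0], (![0, 0, 0, 0, 1] : Fin 5 → ℝ)} := by
  refine SetLike.lt_iff_le_and_exists.mpr
    ⟨span_mono (Set.insert_subset_insert (Set.subset_insert _ _)), ![0, 0, 0, 1, 0],
      subset_span (by simp), fun h => ?_⟩
  obtain ⟨a, b, h⟩ := mem_span_pair.mp h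
  simpa using congrFun h 3

variable {κ}

theorem isCompl_span_pair_snakeboardOrbitTangent (hκ : κ ≠ 0) :
    IsCompl (span ℝ {![c, s, κ, 0, 0], ![0, 0, 0, 0, 1]}) snakeboardOrbitTangent := by
  constructor
  · rw [disjoint_def]
    rintro _ hpair horbit
    obtain ⟨a, b, rfl⟩ := mem_span_pair.mp hpair
    obtain ⟨ha, rfl⟩ : a * κ = 0 ∧ b = 0 := by simpa using mem_snakeboardOrbitTangent_iff.mp horbit
    obtain rfl : a = 0 := (mul_eq_zero.mp ha).resolve_right hκ
    simp
  · rw [codisjoint_iff_exists_add_eq]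
    intro z
    set x : Fin 5 → ℝ := (z 2 / κ) • ![c, s, κ, 0, 0] + z 4 • ![0, 0, 0, 0, 1]
    refine ⟨x, z - x, mem_span_pair.mpr ⟨_, _, rfl⟩, ?_, add_sub_cancel x z⟩
    rw [mem_snakeboardOrbitTangent_iff]
    simp [x, hκ]

theorem setOf_eq_span_pair_of_fiberDeriv (hκ : κ ≠ 0) (F : (Fin 5 → ℝ) → Fin 5 → ℝ)
    (hF : ∀ lam, F lam = (lam ⬝ᵥ ![c, s, κ, 0, 0]) • ![c, s, κ, 0, 0]
      + lam 3 • ![0, 0, 0, 1, 0] + lam 4 • ![0, 0, 0, 0, 1]) :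
    {v | ∃ lam : Fin 5 → ℝ, lam 0 = 0 ∧ lam 1 = 0 ∧ lam 3 = 0 ∧ v = F lam}
      = span ℝ {![c, s, κ, 0, 0], ![0, 0, 0, 0, 1]} := by
  ext v
  simp only [Set.mem_ofPred_eq, SetLike.mem_coe, mem_span_pair, hF]
  constructor
  · rintro ⟨lam, -, -, h3, rfl⟩
    exact ⟨lam ⬝ᵥ ![c, s, κ, 0, 0], lam 4, by simp [h3]⟩
  · rintro ⟨a, b, rfl⟩
    have hdot : ![0, 0, a / κ, 0, b] ⬝ᵥ ![c, s, κ, 0, 0] = a := by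
      simp [dotProduct, Fin.sum_univ_five, hκ]
    exact ⟨![0, 0, a / κ, 0, b], rfl, rfl, rfl, by simp [hdot]⟩

end Snakeboard

/-- For the snakeboard kinematic system on `M = SE(2) × S¹ × S¹` with
coordinates `q = (x₁, x₂, θ, ψ, φ)` (indices `0,…,4`), control vector fields
`X₁ = cos θ ∂_{x₁} + sin θ ∂_{x₂} − (tan φ / r) ∂_θ`, `X₂ = ∂_ψ`, `X₃ = ∂_φ`, and symmetry
group `G = ℝ² × SO(2)` acting by `(a,b,β)·(x₁,x₂,θ,ψ,φ) = (x₁+a, x₂+b, θ, ψ+β, φ)`: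
the momentum map of the cotangent lifted action is `J(q, λ) = (λ₁, λ₂, λ_ψ)` (pairing of
`λ` with the generators `∂_{x₁}, ∂_{x₂}, ∂_ψ`), and the distribution `ℋ = 𝔽H(J⁻¹(0))`
equals `span{X₁, X₃}`, a proper subspace of `𝒟 = span{X₁, X₂, X₃}` that is complementary
in `T_qM` to the tangent space of the group orbit (at a point where `tan φ ≠ 0`).

`H` is the snakeboard optimal Hamiltonian and `FH` its fiber derivative, characterized by
`⟨β, 𝔽H(λ)⟩ = d/dε|₀ H(q, λ + εβ)`. -/
theorem snakeboard_horizontal_distribution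
    (r : ℝ) (hr : r ≠ 0)
    (q : Fin 5 → ℝ) (hq : Real.tan (q 4) ≠ 0)
    (H : (Fin 5 → ℝ) → (Fin 5 → ℝ) → ℝ)
    (hH : ∀ p lam : Fin 5 → ℝ,
      H p lam = (1/2) * ((lam 0 * Real.cos (p 2) + lam 1 * Real.sin (p 2)
        - lam 2 * Real.tan (p 4) / r)^2 + (lam 3)^2 + (lam 4)^2))
    (FH : (Fin 5 → ℝ) → (Fin 5 → ℝ) → (Fin 5 → ℝ))
    (hFH : ∀ p lam w : Fin 5 → ℝ,
      (∑ i, w i * FH p lam i) = deriv (fun ε : ℝ => H p (lam + ε • w)) 0)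
    (X1 X2 X3 : (Fin 5 → ℝ) → Fin 5 → ℝ)
    (hX1 : ∀ p, X1 p = ![Real.cos (p 2), Real.sin (p 2), -Real.tan (p 4) / r, 0, 0])
    (hX2 : ∀ p, X2 p = ![0, 0, 0, 1, 0])
    (hX3 : ∀ p, X3 p = ![0, 0, 0, 0, 1]) :
    -- the momentum map is J(q, λ) = (λ₁, λ₂, λ_ψ): pairing with the generators
    (∀ (lam : Fin 5 → ℝ) (a b β : ℝ),
      (∑ i, lam i * (a • (![1,0,0,0,0] : Fin 5 → ℝ)
          + b • (![0,1,0,0,0] : Fin 5 → ℝ) + β • (![0,0,0,1,0] : Fin 5 → ℝ)) i)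
        = a * lam 0 + b * lam 1 + β * lam 3) ∧
    -- ℋ = 𝔽H(J⁻¹(0)) = span{X₁, X₃}
    ({v : Fin 5 → ℝ | ∃ lam : Fin 5 → ℝ,
        lam 0 = 0 ∧ lam 1 = 0 ∧ lam 3 = 0 ∧ v = FH q lam}
      = ↑(Submodule.span ℝ ({X1 q, X3 q} : Set (Fin 5 → ℝ)))) ∧
    -- a proper subspace of 𝒟 = span{X₁, X₂, X₃}
    (Submodule.span ℝ ({X1 q, X3 q} : Set (Fin 5 → ℝ))
      < Submodule.span ℝ ({X1 q, X2 q, X3 q} : Set (Fin 5 → ℝ))) ∧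
    -- complementary to the tangent space of the group orbit
    IsCompl (Submodule.span ℝ ({X1 q, X3 q} : Set (Fin 5 → ℝ)))
      (Submodule.span ℝ
        ({![1,0,0,0,0], ![0,1,0,0,0], ![0,0,0,1,0]} : Set (Fin 5 → ℝ))) := by
  set κ := -Real.tan (q 4) / r
  have hκ : κ ≠ 0 := div_ne_zero (neg_ne_zero.mpr hq) hr
  have hX1q : X1 q = ![Real.cos (q 2), Real.sin (q 2), κ, 0, 0] := by rw [hX1]
  have hHq : H q = normalHamiltonian ![X1 q, X2 q, X3 q] := funext fun lam => by
    simp only [hH, normalHamiltonian, Fin.sum_univ_three, dotProduct, Fin.sum_univ_five, hX1q,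
      hX2, hX3, cons_val_zero, cons_val_one, cons_val]
    ring
  have hFHq (lam : Fin 5 → ℝ) :
      FH q lam = (lam ⬝ᵥ X1 q) • X1 q + lam 3 • X2 q + lam 4 • X3 q := by
    have hfib : IsFiberDeriv (H q) lam (FH q lam) := hFH q lam
    rw [hHq] at hfib
    simp [hfib.eq_sum_smul, Fin.sum_univ_three, dotProduct, Fin.sum_univ_five, hX2, hX3]
  rw [hX1q, hX2, hX3] at hFHq ⊢
  refine ⟨fun lam a b β => ?_, setOf_eq_span_pair_of_fiberDeriv _ _ hκ _ hFHq,
    span_pair_lt_span_triple _ _ _, isCompl_span_pair_snakeboardOrbitTangent _ _ hκ⟩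
  simp only [Fin.sum_univ_five, Pi.add_apply, Pi.smul_apply, smul_eq_mul, cons_val_zero,
    cons_val_one, cons_val]
  ring
end
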